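/- For the generalised factorial with rectangular partition: if λ = (n^N) (N parts all equal to n), α = 2/β, q = 1 + β(N−1)/2, q' = 1 + 2(n−1)/β, and γ' = 2(γ+1)/β − 1, then [γ+q]_λ^{(2/β)} / [γ'+q']_{λ'}^{(β/2)} = (β/2)^{nN}, where λ' = (N^n). -/

import Mathlib

/-!
Since `Γ(x + n) / Γ(x) = x (x + 1) ⋯ (x + n - 1)`, the generalised factorial of the rectangle
`(n^N)` is a product over its `N n` boxes; with `q = 1 + β(N−1)/2` the box `(j, k)` contributes
`γ + 1 + j β/2 + k` after reversing the order of the rows. The conjugate side gives the same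
boxes transposed, each scaled by `2/β`, whence the ratio `(β/2)^{nN}`.
-/

open Finset

theorem Real.Gamma_add_nat_div_Gamma {x : ℝ} (hx : ∀ k : ℕ, x ≠ -k) (n : ℕ) :
    Real.Gamma (x + n) / Real.Gamma x = ∏ k ∈ range n, (x + k) := by
  induction n with
  | zero => simp [Real.Gamma_ne_zero hx]
  | succ n ih =>
    have hxn : x + n ≠ 0 := fun h => hx n (by linarith)
    rw [Nat.cast_succ, ← add_assoc, Real.Gamma_add_one hxn, mul_div_assoc, ih,
      prod_range_succ, mul_comm]

def rectangularPochhammer (a c : ℝ) (N n : ℕ) : ℝ :=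
  ∏ j ∈ range N, ∏ k ∈ range n, (a + j * c + k)

theorem rectangularPochhammer_pos {a c : ℝ} (ha : 0 < a) (hc : 0 ≤ c) (N n : ℕ) :
    0 < rectangularPochhammer a c N n :=
  prod_pos fun _ _ => prod_pos fun _ _ => by positivity

theorem rectangularPochhammer_div_inv {a c : ℝ} (hc : c ≠ 0) (N n : ℕ) :
    rectangularPochhammer (a / c) c⁻¹ n N = c⁻¹ ^ (n * N) * rectangularPochhammer a c N n := by
  have hbox : ∀ j k : ℕ, a / c + j * c⁻¹ + k = c⁻¹ * (a + k * c + j) := by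
    intro j k; field_simp; ring
  simp only [rectangularPochhammer, hbox, prod_mul_distrib, prod_const, card_range, ← pow_mul]
  rw [prod_comm, mul_comm n]

theorem prod_Gamma_div_Gamma_eq_rectangularPochhammer {u d : ℝ} {N : ℕ} (hd : 0 ≤ d)
    (hu : 0 < u - (N - 1) * d) (n : ℕ) :
    ∏ j ∈ range N, Real.Gamma (u - j * d + n) / Real.Gamma (u - j * d) =
      rectangularPochhammer (u - (N - 1) * d) d N n := by
  rw [rectangularPochhammer]
  conv_rhs => rw [← prod_range_reflect]
  refine prod_congr rfl fun j hj => ?_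
  have hjN : j < N := mem_range.mp hj
  have hreflect : ((N - 1 - j : ℕ) : ℝ) = N - 1 - j := by
    rw [Nat.cast_sub (by omega), Nat.cast_sub (by omega), Nat.cast_one]
  have hpos : 0 < u - j * d := by
    have : (0 : ℝ) ≤ (N - 1 - j) * d := mul_nonneg (by rw [← hreflect]; positivity) hd
    linarith
  rw [Real.Gamma_add_nat_div_Gamma (fun k => by have := k.cast_nonneg (α := ℝ); linarith), hreflect]
  exact prod_congr rfl fun k _ => by ring

/-- For the rectangular partition `λ = (n^N)` (so `λ' = (N^n)`), with
`α = 2/β`, `q = 1 + β(N−1)/2`, `q' = 1 + 2(n−1)/β`, `γ' = 2(γ+1)/β − 1`, the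
generalised factorials `[u]_λ^{(α)} = ∏_j Γ(u−(j−1)/α+λ_j)/Γ(u−(j−1)/α)`
satisfy `[γ+q]_λ^{(2/β)} / [γ'+q']_{λ'}^{(β/2)} = (β/2)^{nN}`. -/
theorem generalised_factorial_rectangular_ratio (β γ : ℝ) (hβ : 0 < β)
    (hγ : -1 < γ) (N n : ℕ) :
    (∏ j ∈ Finset.range N,
        Real.Gamma ((γ + (1 + β * (N - 1) / 2)) - (j : ℝ) * (β / 2) + n) /
          Real.Gamma ((γ + (1 + β * (N - 1) / 2)) - (j : ℝ) * (β / 2))) /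
      (∏ j ∈ Finset.range n,
        Real.Gamma (((2 * (γ + 1) / β - 1) + (1 + 2 * (n - 1) / β))
            - (j : ℝ) * (2 / β) + N) /
          Real.Gamma (((2 * (γ + 1) / β - 1) + (1 + 2 * (n - 1) / β))
            - (j : ℝ) * (2 / β)))
      = (β / 2) ^ (n * N) := by
  have hrow : γ + (1 + β * (N - 1) / 2) - (N - 1) * (β / 2) = γ + 1 := by ring
  have hcol : 2 * (γ + 1) / β - 1 + (1 + 2 * (n - 1) / β) - (n - 1) * (2 / β) =
      (γ + 1) / (β / 2) := by field_simp; ring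
  have hγ1 : 0 < γ + 1 := by linarith
  rw [prod_Gamma_div_Gamma_eq_rectangularPochhammer (by positivity) (by rw [hrow]; exact hγ1),
    prod_Gamma_div_Gamma_eq_rectangularPochhammer (by positivity)
      (by rw [hcol]; positivity), hrow, hcol, ← inv_div β 2, rectangularPochhammer_div_inv (by positivity),
    mul_comm, ← div_div, div_self (rectangularPochhammer_pos hγ1 (by positivity) N n).ne',
    one_div, inv_pow, inv_inv]
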